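/- arXiv:0907.2361 — 5 statements merged into one kernel-verified Lean document; each statement's English description precedes it below -/
import Mathlib

section
/- Let (C, J) be a small site and let l : C → Sh(C, J) be the composite of the Yoneda embedding with sheafification. For an object c of C, a sieve R on l(c) in Sh(C, J) is (jointly) epimorphic if and only if the sieve {f : d → c in C | l(f) ∈ R} is J-covering. -/
open CategoryTheory Limits

universe u

/-- A sieve on an object of a category is epimorphic if its morphisms form a jointly
epimorphic family. -/
def EpimorphicSieve {E : Type*} [Category E] {A : E} (S : Sieve A) : Prop :=
  ∀ ⦃Z : E⦄ (g h : A ⟶ Z), (∀ ⦃Y : E⦄ (f : Y ⟶ A), S f → f ≫ g = f ≫ h) → g = h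

/-! Write `ℓ = a ∘ y`. Maps `ℓ d ⟶ Z` are the sections of `Z` over `d`, so the `ℓ d` generate
`Sh(C, J)`, and since `y c ⟶ a (y c)` is locally surjective, every map `ℓ d ⟶ ℓ c` is, on a
`J`-cover of `d`, of the form `ℓ f`. Hence `R` is epimorphic iff maps out of `ℓ c` are determined
by their composites with the `ℓ f ∈ R`. If `S = ℓ⁻¹ R` covers `c`, such composites determine a
section of a sheaf by separatedness. Conversely, the maps `ℓ c ⟶ Ω_J` classifying the closures of
`S` and of the maximal sieve agree on every `ℓ f` with `f ∈ S`, so epimorphicity forces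
`close S = ⊤`, i.e. `S ∈ J c`. -/

namespace CategoryTheory.GrothendieckTopology

open Opposite

variable {C : Type u} [SmallCategory C] (J : GrothendieckTopology C)

noncomputable abbrev sheafifiedYoneda : C ⥤ Sheaf J (Type u) :=
  CategoryTheory.yoneda ⋙ presheafToSheaf J (Type u)

noncomputable def sheafifiedYonedaEquiv {c : C} {Z : Sheaf J (Type u)} :
    (J.sheafifiedYoneda.obj c ⟶ Z) ≃ Z.obj.obj (op c) :=
  ((sheafificationAdjunction J (Type u)).homEquiv _ Z).trans CategoryTheory.yonedaEquiv

variable {J}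

lemma sheafifiedYonedaEquiv_naturality {c d : C} (f : d ⟶ c) {Z : Sheaf J (Type u)}
    (g : J.sheafifiedYoneda.obj c ⟶ Z) :
    J.sheafifiedYonedaEquiv (J.sheafifiedYoneda.map f ≫ g) =
      Z.obj.map f.op (J.sheafifiedYonedaEquiv g) := by
  simp only [sheafifiedYonedaEquiv, Equiv.trans_apply, Functor.comp_map,
    Adjunction.homEquiv_naturality_left, CategoryTheory.yonedaEquiv_naturality]

lemma sheafifiedYonedaEquiv_comp {c : C} {W Z : Sheaf J (Type u)}
    (α : J.sheafifiedYoneda.obj c ⟶ W) (β : W ⟶ Z) :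
    J.sheafifiedYonedaEquiv (α ≫ β) = β.hom.app (op c) (J.sheafifiedYonedaEquiv α) := by
  simp only [sheafifiedYonedaEquiv, Equiv.trans_apply, Adjunction.homEquiv_naturality_right,
    CategoryTheory.yonedaEquiv_comp]
  rfl

lemma sheafifiedYonedaEquiv_map {c d : C} (f : d ⟶ c) :
    J.sheafifiedYonedaEquiv (J.sheafifiedYoneda.map f) =
      (CategoryTheory.toSheafify J (CategoryTheory.yoneda.obj c)).app (op d) f := by
  rw [← Category.comp_id (J.sheafifiedYoneda.map f), sheafifiedYonedaEquiv_naturality]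
  simp only [sheafifiedYonedaEquiv, Equiv.trans_apply, Adjunction.homEquiv_unit]
  exact CategoryTheory.map_yonedaEquiv _ _

lemma sheafifiedYoneda_hom_ext {W Z : Sheaf J (Type u)} {g h : W ⟶ Z}
    (H : ∀ (d : C) (x : J.sheafifiedYoneda.obj d ⟶ W), x ≫ g = x ≫ h) : g = h := by
  apply Sheaf.hom_ext
  ext ⟨d⟩ w
  obtain ⟨x, rfl⟩ := J.sheafifiedYonedaEquiv.surjective w
  show g.hom.app (op d) _ = h.hom.app (op d) _
  rw [← sheafifiedYonedaEquiv_comp, ← sheafifiedYonedaEquiv_comp, H]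

lemma sheafifiedYoneda_hom_ext_of_mem {d : C} {Z : Sheaf J (Type u)}
    {x y : J.sheafifiedYoneda.obj d ⟶ Z} {T : Sieve d} (hT : T ∈ J d)
    (H : ∀ ⦃d' : C⦄ (k : d' ⟶ d), T k →
      J.sheafifiedYoneda.map k ≫ x = J.sheafifiedYoneda.map k ≫ y) : x = y := by
  apply J.sheafifiedYonedaEquiv.injective
  refine ((isSheaf_iff_isSheaf_of_type J _).1 Z.property T hT).isSeparatedFor.ext
    fun d' k hk => ?_
  rw [← sheafifiedYonedaEquiv_naturality, ← sheafifiedYonedaEquiv_naturality, H k hk]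

lemma exists_mem_forall_sheafifiedYoneda_map_comp_eq_map {c d : C}
    (χ : J.sheafifiedYoneda.obj d ⟶ J.sheafifiedYoneda.obj c) :
    ∃ T ∈ J d, ∀ ⦃d' : C⦄ (k : d' ⟶ d), T k →
      ∃ f : d' ⟶ c, J.sheafifiedYoneda.map k ≫ χ = J.sheafifiedYoneda.map f := by
  refine ⟨_, Presheaf.imageSieve_mem J (CategoryTheory.toSheafify J (CategoryTheory.yoneda.obj c))
    (J.sheafifiedYonedaEquiv χ), fun d' k ⟨f, hf⟩ => ⟨f, ?_⟩⟩
  apply J.sheafifiedYonedaEquiv.injective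
  rw [sheafifiedYonedaEquiv_naturality, sheafifiedYonedaEquiv_map]
  exact hf.symm

lemma sheafifiedYoneda_comp_eq_of_map_comp_eq {c : C} (R : Sieve (J.sheafifiedYoneda.obj c))
    {Z : Sheaf J (Type u)} {g h : J.sheafifiedYoneda.obj c ⟶ Z}
    (H : ∀ ⦃d : C⦄ (f : d ⟶ c), R (J.sheafifiedYoneda.map f) →
      J.sheafifiedYoneda.map f ≫ g = J.sheafifiedYoneda.map f ≫ h)
    {W : Sheaf J (Type u)} {φ : W ⟶ J.sheafifiedYoneda.obj c} (hφ : R φ) : φ ≫ g = φ ≫ h := by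
  refine sheafifiedYoneda_hom_ext fun d x => ?_
  obtain ⟨T, hT, hχ⟩ := exists_mem_forall_sheafifiedYoneda_map_comp_eq_map (x ≫ φ)
  refine sheafifiedYoneda_hom_ext_of_mem hT fun d' k hk => ?_
  obtain ⟨f, hf⟩ := hχ k hk
  have hfR : R (J.sheafifiedYoneda.map f) := by
    rw [← hf, ← Category.assoc]
    exact R.downward_closed hφ _
  simp only [← Category.assoc] at hf ⊢
  rw [hf, H f hfR]

theorem epimorphicSieve_iff_forall_sheafifiedYoneda_map {c : C}
    (R : Sieve (J.sheafifiedYoneda.obj c)) :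
    EpimorphicSieve R ↔ ∀ ⦃Z : Sheaf J (Type u)⦄ (g h : J.sheafifiedYoneda.obj c ⟶ Z),
      (∀ ⦃d : C⦄ (f : d ⟶ c), R (J.sheafifiedYoneda.map f) →
        J.sheafifiedYoneda.map f ≫ g = J.sheafifiedYoneda.map f ≫ h) → g = h :=
  ⟨fun hR _ _ _ H => hR _ _ fun _ _ hφ => sheafifiedYoneda_comp_eq_of_map_comp_eq R H hφ,
    fun hR _ g h H => hR g h fun _ _ hf => H _ hf⟩

variable (J)

noncomputable def closureClassifier {c : C} (S : Sieve c) :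
    J.sheafifiedYoneda.obj c ⟶ Sheaf.Ω J :=
  J.sheafifiedYonedaEquiv.symm ⟨J.close S, J.close_isClosed S⟩

variable {J}

lemma sheafifiedYonedaEquiv_closureClassifier_val {c : C} (S : Sieve c) :
    (J.sheafifiedYonedaEquiv (J.closureClassifier S)).1 = J.close S :=
  congrArg Subtype.val (Equiv.apply_symm_apply _ _)

lemma closureClassifier_injective {c : C} {S T : Sieve c}
    (h : J.closureClassifier S = J.closureClassifier T) : J.close S = J.close T := by
  rw [← sheafifiedYonedaEquiv_closureClassifier_val, h, sheafifiedYonedaEquiv_closureClassifier_val]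

lemma sheafifiedYoneda_map_comp_closureClassifier {c d : C} (f : d ⟶ c) (S : Sieve c) :
    J.sheafifiedYoneda.map f ≫ J.closureClassifier S = J.closureClassifier (S.pullback f) := by
  apply J.sheafifiedYonedaEquiv.injective
  rw [sheafifiedYonedaEquiv_naturality]
  apply Subtype.ext
  change (J.sheafifiedYonedaEquiv (J.closureClassifier S)).1.pullback f = _
  rw [sheafifiedYonedaEquiv_closureClassifier_val, sheafifiedYonedaEquiv_closureClassifier_val,
    J.pullback_close]

end CategoryTheory.GrothendieckTopology

/-- For `l : C ⥤ Sh(C, J)` the composite of Yoneda with sheafification, a sieve `R` on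
`l(c)` is epimorphic iff the sieve `{f : d ⟶ c | l(f) ∈ R}` is `J`-covering. -/
theorem epimorphicSieve_iff_pullback_covering (C : Type u) [SmallCategory C]
    (J : GrothendieckTopology C) (c : C)
    (R : Sieve ((yoneda ⋙ presheafToSheaf J (Type u)).obj c)) :
    EpimorphicSieve R ↔ R.functorPullback (yoneda ⋙ presheafToSheaf J (Type u)) ∈ J c := by
  rw [GrothendieckTopology.epimorphicSieve_iff_forall_sheafifiedYoneda_map]
  constructor
  · intro hR
    rw [← J.close_eq_top_iff_mem, ← (J.close_eq_top_iff_mem ⊤).2 (J.top_mem c)]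
    refine GrothendieckTopology.closureClassifier_injective (hR _ _ fun _ f hf => ?_)
    rw [GrothendieckTopology.sheafifiedYoneda_map_comp_closureClassifier,
      GrothendieckTopology.sheafifiedYoneda_map_comp_closureClassifier,
      Sieve.pullback_top, Sieve.pullback_eq_top_of_mem (R.functorPullback _) hf]
  · intro hS Z g h H
    exact GrothendieckTopology.sheafifiedYoneda_hom_ext_of_mem hS H
end

section
/- Let (C, J) be a small site. For an object c of C, the object l(c) = a_J(y(c)) of Sh(C, J) is compact if and only if every J-covering sieve on c contains a finite family of morphisms generating a J-covering sieve. -/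
/-!
A family `fᵢ : Yᵢ ⟶ F` of sheaves is jointly epimorphic iff the union of the images of the `fᵢ`
is dense in `F`: the inclusion of its closure is a monomorphism through which every `fᵢ` factors,
hence an isomorphism when the family is jointly epic, and conversely two maps out of `F` that agree
on a dense subpresheaf agree. The sheaf `l(c)` is locally generated by the image `u` of `𝟙 c`, so
such a union is dense in `l(c)` iff the sieve of those `g` for which `u|g` lifts through some `fᵢ`
covers `c`. When `fᵢ = l(gᵢ)` for arrows `gᵢ : Xᵢ ⟶ c`, that sieve covers iff the sieve generated
by the `gᵢ` does, because the unit of sheafification is locally surjective and locally injective.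
Thus a covering sieve `R` gives the jointly epic family `(l(g))_{g ∈ R}`, whose finite jointly epic
subfamilies are finite families in `R` generating covering sieves; conversely, for a jointly epic
family, a finite generating subfamily of its lifting sieve picks out finitely many `fᵢ`.
-/

open CategoryTheory Limits

universe u

/-- A family of morphisms into `A` is jointly epimorphic. -/
def JointlyEpic {E : Type*} [Category E] {ι : Type*} {A : E} {Y : ι → E}
    (f : ∀ i, Y i ⟶ A) : Prop :=
  ∀ ⦃Z : E⦄ (g h : A ⟶ Z), (∀ i, f i ≫ g = f i ≫ h) → g = h

/-- An object is compact if every small jointly epimorphic family over it contains a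
finite jointly epimorphic subfamily. -/
def CompactObj {C : Type u} [SmallCategory C] {J : GrothendieckTopology C}
    (A : Sheaf J (Type u)) : Prop :=
  ∀ ⦃ι : Type u⦄ (Y : ι → Sheaf J (Type u)) (f : ∀ i, Y i ⟶ A),
    JointlyEpic f → ∃ s : Finset ι, JointlyEpic fun i : s => f i

open Opposite

universe v w

namespace CategoryTheory

variable {C : Type*} [Category.{v} C] {J : GrothendieckTopology C}

lemma jointlyEpic_of_iSup_range_sheafify_eq_top {F : Sheaf J (Type w)} {ι : Type*}
    {Y : ι → Sheaf J (Type w)} (f : ∀ i, Y i ⟶ F)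
    (hf : (⨆ i, Subfunctor.range (f i).hom).sheafify J = ⊤) : JointlyEpic f := by
  intro Z g h hgh
  ext U s
  have hs : s ∈ ((⨆ i, Subfunctor.range (f i).hom).sheafify J).obj U := by simp [hf]
  refine (((isSheaf_iff_isSheaf_of_type _ _).1 Z.property).isSeparated _ hs).ext ?_
  rintro V φ hφ
  simp only [Subfunctor.sieveOfSection_apply, Subfunctor.iSup_obj, Set.mem_iUnion] at hφ
  obtain ⟨i, t, ht⟩ := hφ
  have e := congr_arg (fun k => k.hom.app (op V) t) (hgh i)
  simp only [ObjectProperty.FullSubcategory.comp_hom, NatTrans.comp_app,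
    ConcreteCategory.comp_apply, ht] at e
  rw [NatTrans.naturality_apply, NatTrans.naturality_apply] at e
  exact e

lemma JointlyEpic.iSup_range_sheafify_eq_top [HasSheafify J (Type w)] {F : Sheaf J (Type w)}
    {ι : Type*} {Y : ι → Sheaf J (Type w)} {f : ∀ i, Y i ⟶ F} (hf : JointlyEpic f) :
    (⨆ i, Subfunctor.range (f i).hom).sheafify J = ⊤ := by
  set G := (⨆ i, Subfunctor.range (f i).hom).sheafify J
  have hF := (isSheaf_iff_isSheaf_of_type _ _).1 F.property
  let S : Sheaf J (Type w) := ⟨G.toFunctor, (isSheaf_iff_isSheaf_of_type _ _).2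
    (Subfunctor.sheafify_isSheaf _ hF)⟩
  let incl : S ⟶ F := ObjectProperty.homMk G.ι
  have : Mono incl := (sheafToPresheaf J _).mono_of_mono_map (inferInstanceAs (Mono G.ι))
  have : Epi incl := ⟨fun g h e => hf g h fun i => by
    have hle : Subfunctor.range (f i).hom ≤ G :=
      (le_iSup (fun i => Subfunctor.range (f i).hom) i).trans (Subfunctor.le_sheafify _ _)
    have hfac : f i = ObjectProperty.homMk (Subfunctor.lift (f i).hom hle) ≫ incl := rfl
    rw [hfac, Category.assoc, Category.assoc, e]⟩
  have : IsIso incl := isIso_of_mono_of_epi incl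
  exact (Subfunctor.eq_top_iff_isIso G).2
    (inferInstanceAs (IsIso ((sheafToPresheaf J _).map incl)))

lemma Subfunctor.sheafify_eq_top_iff_sieveOfSection_mem {F : Cᵒᵖ ⥤ Type v}
    (hF : Presieve.IsSheaf J F) {c : C} (φ : yoneda.obj c ⟶ F) [Presheaf.IsLocallySurjective J φ]
    (G : Subfunctor F) : G.sheafify J = ⊤ ↔ G.sieveOfSection (yonedaEquiv φ) ∈ J c := by
  refine ⟨fun h => (h ▸ trivial : yonedaEquiv φ ∈ (G.sheafify J).obj (op c)), fun h => ?_⟩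
  have hφ : Subfunctor.range φ ≤ G.sheafify J := by
    rwa [Subfunctor.range_eq_ofSection, Subfunctor.ofSection_le_iff]
  rw [eq_top_iff, ← (Presheaf.isLocallySurjective_iff_range_sheafify_eq_top' J φ).1 inferInstance]
  exact Subfunctor.sheafify_le _ _ hφ hF (G.sheafify_isSheaf hF)

section Representable

variable {C : Type u} [SmallCategory C] (J : GrothendieckTopology C)

lemma jointlyEpic_iff_sieveOfSection_mem {c : C} {ι : Type*} {Y : ι → Sheaf J (Type u)}
    (f : ∀ i, Y i ⟶ (presheafToSheaf J (Type u)).obj (yoneda.obj c)) :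
    JointlyEpic f ↔ (⨆ i, Subfunctor.range (f i).hom).sieveOfSection
      (yonedaEquiv (toSheafify J (yoneda.obj c))) ∈ J c := by
  rw [← Subfunctor.sheafify_eq_top_iff_sieveOfSection_mem
    ((isSheaf_iff_isSheaf_of_type _ _).1 ((presheafToSheaf J _).obj (yoneda.obj c)).property)]
  exact ⟨JointlyEpic.iSup_range_sheafify_eq_top, jointlyEpic_of_iSup_range_sheafify_eq_top f⟩

lemma pullback_generate_singleton_mem_of_toSheafify_mem_range {c d X : C} (f : X ⟶ c)
    (g : d ⟶ c) (hg : (toSheafify J (yoneda.obj c)).app (op d) g ∈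
      (Subfunctor.range (sheafifyMap J (yoneda.map f))).obj (op d)) :
    (Sieve.generate (Presieve.singleton f)).pullback g ∈ J d := by
  obtain ⟨t, ht⟩ := hg
  refine J.transitive (Presheaf.imageSieve_mem J (toSheafify J (yoneda.obj X)) t) _ ?_
  rintro V k ⟨ψ, hψ⟩
  have heq : (toSheafify J (yoneda.obj c)).app (op V) (k ≫ g) =
      (toSheafify J (yoneda.obj c)).app (op V) (ψ ≫ f) := by
    rw [show k ≫ g = (yoneda.obj c).map k.op g from rfl, NatTrans.naturality_apply, ← ht,
      ← NatTrans.naturality_apply, ← hψ]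
    exact (ConcreteCategory.congr_hom
      (NatTrans.congr_app (toSheafify_naturality J (yoneda.map f)) (op V)) ψ).symm
  refine J.superset_covering ?_ (Presheaf.equalizerSieve_mem J _ _ _ heq)
  rintro W m hm
  exact ⟨X, m ≫ ψ, f, Presieve.singleton.mk, by simpa using hm.symm⟩

lemma jointlyEpic_map_yoneda_map_iff_ofArrows_mem {c : C} {ι : Type*} {X : ι → C}
    (f : ∀ i, X i ⟶ c) :
    JointlyEpic (fun i => (presheafToSheaf J (Type u)).map (yoneda.map (f i))) ↔
      Sieve.ofArrows X f ∈ J c := by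
  rw [jointlyEpic_iff_sieveOfSection_mem]
  have mem_iff : ∀ {d} (g : d ⟶ c), (⨆ i, Subfunctor.range
      ((presheafToSheaf J (Type u)).map (yoneda.map (f i))).hom).sieveOfSection
        (yonedaEquiv (toSheafify J (yoneda.obj c))) g ↔
      ∃ i, (toSheafify J (yoneda.obj c)).app (op d) g ∈
        (Subfunctor.range (sheafifyMap J (yoneda.map (f i)))).obj (op d) := by
    intro d g
    simp only [Subfunctor.sieveOfSection_apply, map_yonedaEquiv, Subfunctor.iSup_obj,
      Set.mem_iUnion]
  constructor
  · intro h
    refine J.transitive h _ fun d g hg => ?_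
    obtain ⟨i, hi⟩ := (mem_iff g).1 hg
    refine J.superset_covering (Sieve.pullback_monotone g ?_)
      (pullback_generate_singleton_mem_of_toSheafify_mem_range J (f i) g hi)
    rw [Sieve.generate_le_iff]
    rintro _ _ ⟨⟩
    exact Sieve.ofArrows_mk X f i
  · refine J.superset_covering ?_
    rw [Sieve.ofArrows, Sieve.generate_le_iff]
    rintro _ _ ⟨i⟩
    refine (mem_iff (f i)).2 ⟨i, (toSheafify J (yoneda.obj (X i))).app _ (𝟙 _), ?_⟩
    have := (ConcreteCategory.congr_hom
      (NatTrans.congr_app (toSheafify_naturality J (yoneda.map (f i))) (op (X i))) (𝟙 (X i))).symm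
    simp only [NatTrans.comp_app, ConcreteCategory.comp_apply] at this
    simpa using this

end Representable

end CategoryTheory

/-- `l(c) = a_J(y(c))` is compact in `Sh(C, J)` iff every `J`-covering sieve on `c`
contains a finite family of morphisms generating a `J`-covering sieve. -/
theorem compact_lc_iff (C : Type u) [SmallCategory C] (J : GrothendieckTopology C)
    (c : C) :
    CompactObj ((yoneda ⋙ presheafToSheaf J (Type u)).obj c) ↔
      ∀ R ∈ J c, ∃ (ι : Type u) (_ : Finite ι) (X : ι → C) (f : ∀ i, X i ⟶ c),
        (∀ i, R (f i)) ∧ Sieve.generate (Presieve.ofArrows X f) ∈ J c := by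
  constructor
  · intro hcompact R hR
    let g : ∀ p : {p : Σ d : C, d ⟶ c // R p.2}, p.1.1 ⟶ c := fun p => p.1.2
    have hepi : JointlyEpic fun p => (presheafToSheaf J (Type u)).map (yoneda.map (g p)) := by
      refine (jointlyEpic_map_yoneda_map_iff_ofArrows_mem J g).2 (J.superset_covering ?_ hR)
      intro d h hh
      exact Sieve.ofArrows_mk _ g ⟨⟨d, h⟩, hh⟩
    obtain ⟨s, hs⟩ := hcompact _ _ hepi
    exact ⟨s, inferInstance, _, fun p => g p, fun p => p.1.2,
      (jointlyEpic_map_yoneda_map_iff_ofArrows_mem J _).1 hs⟩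
  · intro h ι Y f hf
    obtain ⟨κ, _, X, g, hg, hcov⟩ := h _ ((jointlyEpic_iff_sieveOfSection_mem J f).1 hf)
    simp only [Subfunctor.sieveOfSection_apply, Subfunctor.iSup_obj, Set.mem_iUnion] at hg
    choose idx hidx using hg
    refine ⟨(Set.finite_range idx).toFinset, (jointlyEpic_iff_sieveOfSection_mem J _).2
      (J.superset_covering ?_ hcov)⟩
    rw [Sieve.generate_le_iff]
    rintro _ _ ⟨j⟩
    simp only [Subfunctor.sieveOfSection_apply, Subfunctor.iSup_obj, Set.mem_iUnion]
    exact ⟨⟨idx j, (Set.finite_range idx).mem_toFinset.2 ⟨j, rfl⟩⟩, hidx j⟩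
end

section
/- Let (C, J) be a small site. For an object c of C, the object l(c) = a_J(y(c)) of Sh(C, J) is supercompact if and only if every J-covering sieve on c contains a single morphism generating a J-covering sieve. -/
open CategoryTheory Limits

universe u

/-- An object is supercompact if every small jointly epimorphic family over it contains
an epimorphism. -/
def SupercompactObj {C : Type u} [SmallCategory C] {J : GrothendieckTopology C}
    (A : Sheaf J (Type u)) : Prop :=
  ∀ ⦃ι : Type u⦄ (Y : ι → Sheaf J (Type u)) (f : ∀ i, Y i ⟶ A),
    JointlyEpic f → ∃ i, Epi (f i)

/-!
Morphisms `l(c) ⟶ Z` are the sections of `Z` over `c`, and `l(g)` is epic exactly when `g`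
generates a covering sieve (epimorphisms of sheaves are the locally surjective maps). For a
covering sieve `R`, the family of all `l(g)` with `g ∈ R` is jointly epic because sheaves are
separated. Conversely, a jointly epic family `fᵢ` into `l(c)` is jointly locally surjective, so the
`g` for which `l(g)` factors through some `fᵢ` form a covering sieve; a member of it generating a
covering sieve makes the corresponding `fᵢ` epic.
-/

open Opposite

theorem JointlyEpic.epi_of_fac {E : Type*} [Category E] {ι : Type*} {A B : E} {Y : ι → E}
    {f : ∀ i, Y i ⟶ A} (hf : JointlyEpic f) (m : B ⟶ A) (k : ∀ i, Y i ⟶ B)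
    (hk : ∀ i, k i ≫ m = f i) : Epi m :=
  ⟨fun g h hgh ↦ hf g h fun i ↦ by rw [← hk i, Category.assoc, hgh, Category.assoc]⟩

section

variable {C : Type*} [Category C] {J : GrothendieckTopology C} [HasSheafify J (Type u)]
  {ι : Type*} {A : Sheaf J (Type u)} {Y : ι → Sheaf J (Type u)} {f : ∀ i, Y i ⟶ A}

theorem JointlyEpic.sheafify_iSup_range_eq_top (hf : JointlyEpic f) :
    (⨆ i, Subfunctor.range (f i).hom).sheafify J = ⊤ := by
  set G := (⨆ i, Subfunctor.range (f i).hom).sheafify J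
  have hA := (isSheaf_iff_isSheaf_of_type J A.obj).1 A.property
  let GS : Sheaf J (Type u) :=
    ⟨G.toFunctor, (isSheaf_iff_isSheaf_of_type _ _).2 (Subfunctor.sheafify_isSheaf _ hA)⟩
  let incl : GS ⟶ A := ⟨G.ι⟩
  have hrange (i : ι) : Subfunctor.range (f i).hom ≤ G :=
    (le_iSup (fun i ↦ Subfunctor.range (f i).hom) i).trans (Subfunctor.le_sheafify J _)
  have hepi : Epi incl :=
    hf.epi_of_fac incl (fun i ↦ ⟨Subfunctor.lift _ (hrange i)⟩) fun _ ↦ rfl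
  have hls := (Sheaf.isLocallySurjective_iff_epi incl).2 hepi
  rwa [Sheaf.IsLocallySurjective, Presheaf.isLocallySurjective_iff_range_sheafify_eq_top',
    Subfunctor.range_ι, Subfunctor.sheafify_sheafify _ hA] at hls

theorem JointlyEpic.sieveOfSection_iSup_range_mem (hf : JointlyEpic f) {c : C}
    (s : A.obj.obj (op c)) : (⨆ i, Subfunctor.range (f i).hom).sieveOfSection s ∈ J c := by
  change s ∈ ((⨆ i, Subfunctor.range (f i).hom).sheafify J).obj (op c)
  rw [hf.sheafify_iSup_range_eq_top]
  trivial

end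

theorem Presheaf.imageSieve_yoneda_map {C : Type*} [Category C] {d c e : C} (g : d ⟶ c)
    (w : e ⟶ c) :
    Presheaf.imageSieve (yoneda.map g) w = (Sieve.generate (Presieve.singleton g)).pullback w := by
  ext e' v
  constructor
  · rintro ⟨t, ht⟩
    exact ⟨d, t, g, Presieve.singleton.mk, ht⟩
  · rintro ⟨_, t, _, ⟨⟩, ht⟩
    exact ⟨t, ht⟩

theorem Presheaf.isLocallySurjective_yoneda_map_iff {C : Type*} [Category C]
    (J : GrothendieckTopology C) {d c : C} (g : d ⟶ c) :
    Presheaf.IsLocallySurjective J (yoneda.map g) ↔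
      Sieve.generate (Presieve.singleton g) ∈ J c := by
  refine ⟨fun h ↦ ?_, fun h ↦ ⟨fun w ↦ ?_⟩⟩
  · simpa [imageSieve_yoneda_map] using h.imageSieve_mem (𝟙 c)
  · simpa [imageSieve_yoneda_map] using J.pullback_stable w h

section

variable {C : Type u} [SmallCategory C] (J : GrothendieckTopology C)

theorem epi_sheafifyYoneda_map_iff {d c : C} (g : d ⟶ c) :
    Epi ((yoneda ⋙ presheafToSheaf J (Type u)).map g) ↔
      Sieve.generate (Presieve.singleton g) ∈ J c := by
  rw [← Sheaf.isLocallySurjective_iff_epi, Functor.comp_map,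
    Presheaf.isLocallySurjective_presheafToSheaf_map_iff,
    Presheaf.isLocallySurjective_yoneda_map_iff]

noncomputable def sheafifyYonedaEquiv (c : C) (Z : Sheaf J (Type u)) :
    ((yoneda ⋙ presheafToSheaf J (Type u)).obj c ⟶ Z) ≃ Z.obj.obj (op c) :=
  ((sheafificationAdjunction J (Type u)).homEquiv _ _).trans yonedaEquiv

theorem sheafifyYonedaEquiv_comp {c : C} {Z Z' : Sheaf J (Type u)}
    (a : (yoneda ⋙ presheafToSheaf J (Type u)).obj c ⟶ Z) (φ : Z ⟶ Z') :
    sheafifyYonedaEquiv J c Z' (a ≫ φ) = φ.hom.app (op c) (sheafifyYonedaEquiv J c Z a) := by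
  simp only [sheafifyYonedaEquiv, Equiv.trans_apply]
  rw [Adjunction.homEquiv_naturality_right]
  rfl

theorem sheafifyYonedaEquiv_map_comp {d c : C} (g : d ⟶ c) {Z : Sheaf J (Type u)}
    (a : (yoneda ⋙ presheafToSheaf J (Type u)).obj c ⟶ Z) :
    sheafifyYonedaEquiv J d Z ((yoneda ⋙ presheafToSheaf J (Type u)).map g ≫ a) =
      Z.obj.map g.op (sheafifyYonedaEquiv J c Z a) := by
  simp only [sheafifyYonedaEquiv, Equiv.trans_apply]
  rw [Functor.comp_map, Adjunction.homEquiv_naturality_left, yonedaEquiv_naturality]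

theorem jointlyEpic_sheafifyYoneda_map_of_mem {c : C} {R : Sieve c} (hR : R ∈ J c) :
    JointlyEpic (fun i : (d : C) × {g : d ⟶ c // R g} ↦
      (yoneda ⋙ presheafToSheaf J (Type u)).map i.2.1) := by
  intro Z a b hab
  apply (sheafifyYonedaEquiv J c Z).injective
  have hZ := (isSheaf_iff_isSheaf_of_type J Z.obj).1 Z.property
  refine (hZ.isSeparated _ hR).ext fun d g hg ↦ ?_
  rw [← sheafifyYonedaEquiv_map_comp, ← sheafifyYonedaEquiv_map_comp, hab ⟨d, g, hg⟩]

theorem exists_comp_eq_sheafifyYoneda_map_of_mem_sieveOfSection {c d : C} {ι : Type*}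
    {Y : ι → Sheaf J (Type u)} {f : ∀ i, Y i ⟶ (yoneda ⋙ presheafToSheaf J (Type u)).obj c}
    {g : d ⟶ c}
    (hg : (⨆ i, Subfunctor.range (f i).hom).sieveOfSection (sheafifyYonedaEquiv J c _ (𝟙 _)) g) :
    ∃ i, ∃ θ : (yoneda ⋙ presheafToSheaf J (Type u)).obj d ⟶ Y i,
      θ ≫ f i = (yoneda ⋙ presheafToSheaf J (Type u)).map g := by
  simp only [Subfunctor.sieveOfSection, Subfunctor.iSup_obj, Set.mem_iUnion,
    Subfunctor.range_obj, Set.mem_range] at hg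
  obtain ⟨i, t, ht⟩ := hg
  refine ⟨i, (sheafifyYonedaEquiv J d (Y i)).symm t, (sheafifyYonedaEquiv J d _).injective ?_⟩
  rw [sheafifyYonedaEquiv_comp, Equiv.apply_symm_apply, ht, ← sheafifyYonedaEquiv_map_comp,
    Category.comp_id]

end

/-- `l(c) = a_J(y(c))` is supercompact in `Sh(C, J)` iff every `J`-covering sieve on `c`
contains a single morphism generating a `J`-covering sieve. -/
theorem supercompact_lc_iff (C : Type u) [SmallCategory C] (J : GrothendieckTopology C)
    (c : C) :
    SupercompactObj ((yoneda ⋙ presheafToSheaf J (Type u)).obj c) ↔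
      ∀ R ∈ J c, ∃ (d : C) (f : d ⟶ c),
        R f ∧ Sieve.generate (Presieve.singleton f) ∈ J c := by
  constructor
  · intro hsc R hR
    obtain ⟨⟨d, g, hg⟩, hepi⟩ := hsc _ _ (jointlyEpic_sheafifyYoneda_map_of_mem J hR)
    exact ⟨d, g, hg, (epi_sheafifyYoneda_map_iff J g).1 hepi⟩
  · intro H ι Y f hf
    obtain ⟨d, g, hg, hcov⟩ := H _ (hf.sieveOfSection_iSup_range_mem _)
    obtain ⟨i, θ, hθ⟩ := exists_comp_eq_sheafifyYoneda_map_of_mem_sieveOfSection J hg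
    have := (epi_sheafifyYoneda_map_iff J g).2 hcov
    exact ⟨i, epi_of_epi_fac hθ⟩
end

section
/- Let (C, J) be a rigid small site, and let D be the full subcategory of C on the J-irreducible objects. Then the sheaf topos Sh(C, J) is equivalent to the presheaf topos [D^op, Set]. -/
/-!
The inclusion `ι` of the `J`-irreducible objects is cover dense because the site is
rigid, and it induces the trivial topology on them: a sieve `S` on an irreducible `X` is covering
for the induced topology iff its pushforward is `J`-covering, i.e. maximal, and since `ι` is fully
faithful `S` is the pullback of its pushforward, hence maximal too. The comparison lemma then
identifies `Sh(C, J)` with sheaves for the trivial topology, which are all presheaves.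
-/

open CategoryTheory Limits

universe u

variable {C : Type u} [SmallCategory C]

def JIrreducible (J : GrothendieckTopology C) (c : C) : Prop :=
  ∀ R : Sieve c, R ∈ J c → R = ⊤

def fromIrreducibles (J : GrothendieckTopology C) (c : C) : Presieve c :=
  fun b _ => JIrreducible J b

lemma generate_fromIrreducibles_le_coverByImage (J : GrothendieckTopology C) (c : C) :
    Sieve.generate (fromIrreducibles J c) ≤
      Sieve.coverByImage (ObjectProperty.ι (JIrreducible J)) c := by
  rintro Y f ⟨Z, g, h, hZ, rfl⟩
  exact ⟨⟨⟨Z, hZ⟩, g, h, rfl⟩⟩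

lemma isCoverDense_ι_jIrreducible (J : GrothendieckTopology C)
    (hrigid : ∀ c : C, Sieve.generate (fromIrreducibles J c) ∈ J c) :
    (ObjectProperty.ι (JIrreducible J)).IsCoverDense J :=
  ⟨fun c => J.superset_covering (generate_fromIrreducibles_le_coverByImage J c) (hrigid c)⟩

lemma inducedTopology_eq_bot_of_jIrreducible {D : Type*} [Category D] (J : GrothendieckTopology C)
    (G : D ⥤ C) [G.Full] [G.Faithful] [G.IsCoverDense J]
    (hG : ∀ X : D, JIrreducible J (G.obj X)) :
    G.inducedTopology J = ⊥ := by
  ext X S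
  rw [G.mem_inducedTopology_iff_of_isCoverDense, GrothendieckTopology.bot_covering]
  constructor
  · intro hS
    rw [← Sieve.functorPullback_functorPushforward_eq G (S := S), hG X _ hS,
      Sieve.functorPullback_top]
  · rintro rfl
    rw [Sieve.functorPushforward_top]
    exact J.top_mem _

/-- If `(C, J)` is a rigid site (for every `c`, the family of all morphisms from
`J`-irreducible objects to `c` generates a `J`-covering sieve), then `Sh(C, J)` is
equivalent to presheaves on the full subcategory `D` of `J`-irreducible objects. -/
theorem rigid_site_sheaves_equiv_presheaves (J : GrothendieckTopology C)
    (hrigid : ∀ c : C, Sieve.generate (fromIrreducibles J c) ∈ J c) :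
    Nonempty (Sheaf J (Type u) ≌
      ((ObjectProperty.FullSubcategory fun c : C => JIrreducible J c)ᵒᵖ ⥤ Type u)) := by
  let ι := ObjectProperty.ι (JIrreducible J)
  have := isCoverDense_ι_jIrreducible J hrigid
  have hbot : ι.inducedTopology J = ⊥ :=
    inducedTopology_eq_bot_of_jIrreducible J ι fun X => X.property
  let comparison := ι.sheafInducedTopologyEquivOfIsCoverDense J (Type u)
  rw [hbot] at comparison
  exact ⟨comparison.symm.trans (sheafBotEquivalence _)⟩
end

section
/- Let C be a small category with a Grothendieck topology J such that every J-covering sieve is connected (i.e., the site (C, J) is locally connected; in particular every covering sieve is nonempty). Then for every object c of C, the constant presheaf functor applied pointwise shows: the sheafification l(c) = a_J(y(c)) is an indecomposable object of Sh(C, J). -/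
open CategoryTheory Limits

universe u

variable {C : Type u} [SmallCategory C]

/-- A sieve `R` on `c` is connected if, viewed as a full subcategory of the slice
category `C/c`, it is a connected (in particular nonempty) category. -/
def ConnectedSieve {c : C} (R : Sieve c) : Prop :=
  IsConnected (ObjectProperty.FullSubcategory fun g : Over c => R g.hom)

/-- A site `(C, J)` is locally connected if every `J`-covering sieve is connected. -/
def LocallyConnectedSite (J : GrothendieckTopology C) : Prop :=
  ∀ ⦃c : C⦄ (R : Sieve c), R ∈ J c → ConnectedSieve R

/-- An object is indecomposable if it has no nontrivial coproduct decomposition. -/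
def IsIndecomposableObj {E : Type*} [Category E] (A : E) : Prop :=
  ∀ ⦃B C : E⦄ (f : B ⟶ A) (g : C ⟶ A), Nonempty (IsColimit (BinaryCofan.mk f g)) →
    Nonempty (IsInitial B) ∨ Nonempty (IsInitial C)

/-!
Over a locally connected site the pointwise sum `B ⊕ D` of two sheaves is again a sheaf: restriction
preserves the summand, so on a connected covering sieve a compatible family takes all its values in
one summand, where it amalgamates. Hence binary coproducts in `Sh(C, J)` are pointwise, and a
morphism `l(c) ⟶ B ⨿ D`, being an element of `B(c) ⊕ D(c)`, factors through one of the two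
inclusions. If `l(c) ≅ B ⨿ D`, the inclusion of the other summand then factors through both
inclusions; these are disjoint, so that summand has no sections and is initial.
-/

open Opposite Presieve

universe w

section

variable {𝒞 : Type*} [Category* 𝒞]

theorem CategoryTheory.Presieve.IsSheafFor.exists_isAmalgamation_of_mono {X : 𝒞}
    {R : Presieve X} {P Q : 𝒞ᵒᵖ ⥤ Type w} (hP : IsSheafFor P R) (ι : P ⟶ Q) [Mono ι]
    {x : FamilyOfElements Q R} (hx : x.Compatible)
    (hι : ∀ ⦃Y⦄ (f : Y ⟶ X) (hf : R f), ∃ y, x f hf = ι.app (op Y) y) :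
    ∃ t, x.IsAmalgamation t := by
  choose y hy using hι
  have hxy : x = FamilyOfElements.map y ι := by
    funext Y f hf
    exact hy f hf
  subst hxy
  obtain ⟨t, ht, -⟩ := hP y (hx.of_mono ι)
  exact ⟨ι.app _ t, ht.map ι⟩

instance (P Q : 𝒞 ⥤ Type w) :
    Mono (FunctorToTypes.coprod.inl : P ⟶ FunctorToTypes.coprod P Q) :=
  (NatTrans.mono_iff_mono_app _).2 fun _ => (mono_iff_injective _).2 Sum.inl_injective

instance (P Q : 𝒞 ⥤ Type w) :
    Mono (FunctorToTypes.coprod.inr : Q ⟶ FunctorToTypes.coprod P Q) :=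
  (NatTrans.mono_iff_mono_app _).2 fun _ => (mono_iff_injective _).2 Sum.inr_injective

end

namespace ConnectedSieve

variable {d : C} {S : Sieve d} {P Q : Cᵒᵖ ⥤ Type w}

theorem isLeft_eq (hS : ConnectedSieve S)
    {x : FamilyOfElements (FunctorToTypes.coprod P Q) S} (hx : x.Compatible)
    {Y Y' : C} {f : Y ⟶ d} {f' : Y' ⟶ d} (hf : S f) (hf' : S f') :
    (x f hf).isLeft = (x f' hf').isLeft := by
  have : CategoryTheory.IsConnected _ := hS
  refine constant_of_preserves_morphisms
    (J := ObjectProperty.FullSubcategory fun g : Over d => S g.hom)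
    (fun k => (x k.obj.hom k.property).isLeft) (fun k₁ k₂ m => ?_) ⟨Over.mk f, hf⟩ ⟨Over.mk f', hf'⟩
  have h := congrArg Sum.isLeft
    (hx (𝟙 _) m.hom.left k₁.property k₂.property (by simp [Over.w m.hom]))
  exact (Sum.isLeft_map _ _ _).symm.trans (h.trans (Sum.isLeft_map _ _ _))

theorem isSheafFor_coprod (hS : ConnectedSieve S) (hP : IsSheafFor P S.arrows)
    (hQ : IsSheafFor Q S.arrows) :
    IsSheafFor (FunctorToTypes.coprod P Q) S.arrows := by
  have : CategoryTheory.IsConnected _ := hS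
  obtain ⟨⟨f₀, hf₀⟩⟩ :=
    IsConnected.is_nonempty (J := ObjectProperty.FullSubcategory fun g : Over d => S g.hom)
  rw [← isSeparatedFor_and_exists_isAmalgamation_iff_isSheafFor]
  refine ⟨fun x t₁ t₂ h₁ h₂ => ?_, fun x hx => ?_⟩
  · have h := (h₁ f₀.hom hf₀).trans (h₂ f₀.hom hf₀).symm
    rcases t₁ with a₁ | b₁ <;> rcases t₂ with a₂ | b₂
    · exact congrArg Sum.inl (hP.isSeparatedFor.ext fun Y f hf =>
        Sum.inl_injective ((h₁ f hf).trans (h₂ f hf).symm))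
    · cases h
    · cases h
    · exact congrArg Sum.inr (hQ.isSeparatedFor.ext fun Y f hf =>
        Sum.inr_injective ((h₁ f hf).trans (h₂ f hf).symm))
  · cases hx₀ : (x f₀.hom hf₀).isLeft
    · exact hQ.exists_isAmalgamation_of_mono FunctorToTypes.coprod.inr hx fun Y f hf =>
        Sum.isRight_iff.1 (Sum.isLeft_eq_false.1 ((hS.isLeft_eq hx hf hf₀).trans hx₀))
    · exact hP.exists_isAmalgamation_of_mono FunctorToTypes.coprod.inl hx fun Y f hf =>
        Sum.isLeft_iff.1 ((hS.isLeft_eq hx hf hf₀).trans hx₀)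

end ConnectedSieve

section SheafifiedYoneda

variable (J : GrothendieckTopology C) (c : C)

noncomputable def sheafifiedYonedaEquiv (X : Sheaf J (Type u)) :
    ((yoneda ⋙ presheafToSheaf J (Type u)).obj c ⟶ X) ≃ X.obj.obj (op c) :=
  ((sheafificationAdjunction J (Type u)).homEquiv _ X).trans yonedaEquiv

theorem sheafifiedYonedaEquiv_symm_app {X Y : Sheaf J (Type u)} (m : X ⟶ Y)
    (x : X.obj.obj (op c)) :
    (sheafifiedYonedaEquiv J c Y).symm (m.hom.app (op c) x) =
      (sheafifiedYonedaEquiv J c X).symm x ≫ m := by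
  rw [Equiv.symm_apply_eq]
  simp only [sheafifiedYonedaEquiv, Equiv.trans_apply, Adjunction.homEquiv_naturality_right,
    yonedaEquiv_comp, Equiv.symm_trans_apply, Equiv.apply_symm_apply]
  rfl

end SheafifiedYoneda

namespace LocallyConnectedSite

variable {J : GrothendieckTopology C}

theorem isSheaf_coprod (hJ : LocallyConnectedSite J) {P Q : Cᵒᵖ ⥤ Type w}
    (hP : Presheaf.IsSheaf J P) (hQ : Presheaf.IsSheaf J Q) :
    Presheaf.IsSheaf J (FunctorToTypes.coprod P Q) := by
  rw [isSheaf_iff_isSheaf_of_type] at hP hQ ⊢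
  exact fun _ S hS => (hJ S hS).isSheafFor_coprod (hP S hS) (hQ S hS)

variable (hJ : LocallyConnectedSite J)

def coprod (B D : Sheaf J (Type u)) : Sheaf J (Type u) :=
  ⟨FunctorToTypes.coprod B.obj D.obj, hJ.isSheaf_coprod B.property D.property⟩

def coprodInl (B D : Sheaf J (Type u)) : B ⟶ hJ.coprod B D :=
  ObjectProperty.homMk FunctorToTypes.coprod.inl

def coprodInr (B D : Sheaf J (Type u)) : D ⟶ hJ.coprod B D :=
  ObjectProperty.homMk FunctorToTypes.coprod.inr

noncomputable def isColimitCoprod (B D : Sheaf J (Type u)) :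
    IsColimit (BinaryCofan.mk (hJ.coprodInl B D) (hJ.coprodInr B D)) :=
  isColimitOfReflects (sheafToPresheaf J _)
    ((isColimitMapCoconeBinaryCofanEquiv _ _ _).symm
      (FunctorToTypes.binaryCoproductColimit B.obj D.obj))

theorem isInitial_of_comp_coprodInl_eq_comp_coprodInr {X B D : Sheaf J (Type u)} (h : X ⟶ B)
    (h' : X ⟶ D) (w : h ≫ hJ.coprodInl B D = h' ≫ hJ.coprodInr B D) : Nonempty (IsInitial X) := by
  have hempty (U : Cᵒᵖ) : IsEmpty (X.obj.obj U) :=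
    ⟨fun z => Sum.inl_ne_inr (congr_arg (fun m => m.hom.app U z) w)⟩
  exact ⟨IsInitial.isInitialOfObj (sheafToPresheaf J _) X
    (Functor.isInitial fun U => ((Types.initial_iff_empty _).2 (hempty U)).some)⟩

theorem exists_eq_comp_coprodInl_or_coprodInr (c : C) {B D : Sheaf J (Type u)}
    (φ : (yoneda ⋙ presheafToSheaf J (Type u)).obj c ⟶ hJ.coprod B D) :
    (∃ k, φ = k ≫ hJ.coprodInl B D) ∨ ∃ k, φ = k ≫ hJ.coprodInr B D := by
  obtain ⟨s, rfl⟩ := (sheafifiedYonedaEquiv J c _).symm.surjective φ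
  rcases s with b | d
  · exact .inl ⟨_, sheafifiedYonedaEquiv_symm_app J c (hJ.coprodInl B D) b⟩
  · exact .inr ⟨_, sheafifiedYonedaEquiv_symm_app J c (hJ.coprodInr B D) d⟩

end LocallyConnectedSite

/-- If every `J`-covering sieve is connected (the site is locally connected), then for
every object `c`, the sheafification `l(c) = a_J(y(c))` is indecomposable in
`Sh(C, J)`. -/
theorem lc_indecomposable_of_locally_connected_site (J : GrothendieckTopology C)
    (hJ : LocallyConnectedSite J) (c : C) :
    IsIndecomposableObj ((yoneda ⋙ presheafToSheaf J (Type u)).obj c) := by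
  intro B D f g ⟨hcolim⟩
  let e : (yoneda ⋙ presheafToSheaf J (Type u)).obj c ≅ hJ.coprod B D :=
    hcolim.coconePointUniqueUpToIso (hJ.isColimitCoprod B D)
  have hf : f ≫ e.hom = hJ.coprodInl B D :=
    hcolim.comp_coconePointUniqueUpToIso_hom _ ⟨.left⟩
  have hg : g ≫ e.hom = hJ.coprodInr B D :=
    hcolim.comp_coconePointUniqueUpToIso_hom _ ⟨.right⟩
  rcases hJ.exists_eq_comp_coprodInl_or_coprodInr c e.hom with ⟨k, hk⟩ | ⟨k, hk⟩
  · refine .inr (hJ.isInitial_of_comp_coprodInl_eq_comp_coprodInr (g ≫ k) (𝟙 D) ?_)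
    rw [Category.assoc, ← hk, hg, Category.id_comp]
  · refine .inl (hJ.isInitial_of_comp_coprodInl_eq_comp_coprodInr (𝟙 B) (f ≫ k) ?_)
    rw [Category.assoc, ← hk, hf, Category.id_comp]
end
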